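/- arXiv:2006.16446 — 2 statements merged into one kernel-verified Lean document; each statement's English description precedes it below -/
import Mathlib

section
/- (Theorem 4.1(1), analytic form.) Let D ⊆ ℝ^d be a bounded open set with the divergence property, let a have C¹ entries with a symmetric, let b have C¹ components with div(b) = 0 on an open neighborhood of the closure of D, and let γ ∈ ℝ and β ≥ 0. Suppose u₊ and u₋ are C² on an open neighborhood of the closure of D, vanish on ∂D, and satisfy (β − ∇·a∇ − γ b·∇)u₊ = 1 and (β − ∇·a∇ + γ b·∇)u₋ = 1 at every point of D. Then ∫_D u₊ dx = ∫_D u₋ dx. (Probabilistically: the integrated Laplace transforms of the exit times from D of the diffusions generated by L_{(γ)} and L_{(−γ)} coincide; for β = 0 this says ∫_D E_x τ_D^{(γ)} dx = ∫_D E_x τ_D^{(−γ)} dx.) -/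
open MeasureTheory

noncomputable section

/-- Partial derivative of `f` in the `i`-th coordinate direction. -/
def pd {d : ℕ} (f : (Fin d → ℝ) → ℝ) (i : Fin d) (x : Fin d → ℝ) : ℝ :=
  fderiv ℝ f x (Pi.single i 1)

/-- Divergence of a vector field on `ℝ^d`: `div F = Σ_i ∂_i F_i`. -/
def divg {d : ℕ} (F : (Fin d → ℝ) → (Fin d → ℝ)) (x : Fin d → ℝ) : ℝ :=
  ∑ i, fderiv ℝ (fun y => F y i) x (Pi.single i 1)

/-- The vector field `a∇g`, i.e. `(a∇g)_i = Σ_j a_{ij} ∂_j g`. -/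
def aGrad {d : ℕ} (a : (Fin d → ℝ) → Matrix (Fin d) (Fin d) ℝ)
    (g : (Fin d → ℝ) → ℝ) (x : Fin d → ℝ) : Fin d → ℝ :=
  fun i => ∑ j, a x i j * pd g j x

/-- The operator `Lg = ∇·(a∇g) + b·∇g`. -/
def Lop {d : ℕ} (a : (Fin d → ℝ) → Matrix (Fin d) (Fin d) ℝ)
    (b : (Fin d → ℝ) → (Fin d → ℝ)) (g : (Fin d → ℝ) → ℝ) (x : Fin d → ℝ) : ℝ :=
  divg (aGrad a g) x + ∑ i, b x i * pd g i x

/-- The formal adjoint `L̃f = ∇·(a∇f) − b·∇f − div(b) f`. -/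
def Ladj {d : ℕ} (a : (Fin d → ℝ) → Matrix (Fin d) (Fin d) ℝ)
    (b : (Fin d → ℝ) → (Fin d → ℝ)) (f : (Fin d → ℝ) → ℝ) (x : Fin d → ℝ) : ℝ :=
  divg (aGrad a f) x - (∑ i, b x i * pd f i x) - divg b x * f x

/-- `∇f · a ∇g = Σ_{i,j} (∂_i f) a_{ij} (∂_j g)`. -/
def quadF {d : ℕ} (a : (Fin d → ℝ) → Matrix (Fin d) (Fin d) ℝ)
    (f g : (Fin d → ℝ) → ℝ) (x : Fin d → ℝ) : ℝ :=
  ∑ i, ∑ j, pd f i x * a x i j * pd g j x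

/-- `f` is C² on an open neighborhood of the closure of `D`. -/
def C2Near {d : ℕ} (D : Set (Fin d → ℝ)) (f : (Fin d → ℝ) → ℝ) : Prop :=
  ∃ U : Set (Fin d → ℝ), IsOpen U ∧ closure D ⊆ U ∧ ContDiffOn ℝ 2 f U

/-- A vector field is C¹ on an open neighborhood of the closure of `D`. -/
def C1NearVF {d : ℕ} (D : Set (Fin d → ℝ)) (F : (Fin d → ℝ) → (Fin d → ℝ)) : Prop :=
  ∃ U : Set (Fin d → ℝ), IsOpen U ∧ closure D ⊆ U ∧ ∀ i, ContDiffOn ℝ 1 (fun x => F x i) U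

/-- `D` has the divergence property: `∫_D div F = 0` for every vector field `F` which is
C¹ on an open neighborhood of the closure of `D` and vanishes on the frontier of `D`. -/
def DivProp {d : ℕ} (D : Set (Fin d → ℝ)) : Prop :=
  ∀ F : (Fin d → ℝ) → (Fin d → ℝ), C1NearVF D F → (∀ x ∈ frontier D, F x = 0) →
    ∫ x in D, divg F x = 0

/-- The bilinear form `ℰ_β(f,g) = ∫_D f ((β−L)g) dx`. -/
def Eform {d : ℕ} (D : Set (Fin d → ℝ)) (a : (Fin d → ℝ) → Matrix (Fin d) (Fin d) ℝ)
    (b : (Fin d → ℝ) → (Fin d → ℝ)) (β : ℝ) (f g : (Fin d → ℝ) → ℝ) : ℝ :=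
  ∫ x in D, f x * (β * g x - Lop a b g x)

/-!
Green's identity for `L = ∇·a∇ + b·∇` and its formal adjoint `L̃`: when `a` is symmetric, the
flux `F = g a∇f − f a∇g + f g b` has `div F = g Lf − f L̃g`, the cross terms `∇g·a∇f` and
`∇f·a∇g` cancelling. Applied with `b := γb`, `f := u₊`, `g := u₋`, and using `div b = 0`, the
equations give `div F = u₋(βu₊ − 1) − u₊(βu₋ − 1) = u₊ − u₋` on `D`, while `F` vanishes on `∂D`;
the divergence property then gives `∫_D (u₊ − u₋) = 0`.
-/

open Finset

variable {d : ℕ}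

def greenFlux (a : (Fin d → ℝ) → Matrix (Fin d) (Fin d) ℝ) (b : (Fin d → ℝ) → (Fin d → ℝ))
    (f g : (Fin d → ℝ) → ℝ) (x : Fin d → ℝ) : Fin d → ℝ :=
  g x • aGrad a f x - f x • aGrad a g x + (f x * g x) • b x

section Pointwise

variable {F G : (Fin d → ℝ) → (Fin d → ℝ)} {f g φ : (Fin d → ℝ) → ℝ} {x : Fin d → ℝ}

lemma divg_add (hF : ∀ i, DifferentiableAt ℝ (fun y => F y i) x)
    (hG : ∀ i, DifferentiableAt ℝ (fun y => G y i) x) :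
    divg (fun y => F y + G y) x = divg F x + divg G x := by
  simp only [divg, Pi.add_apply, ← sum_add_distrib]
  refine sum_congr rfl fun i _ => ?_
  rw [fderiv_fun_add (hF i) (hG i)]
  rfl

lemma divg_sub (hF : ∀ i, DifferentiableAt ℝ (fun y => F y i) x)
    (hG : ∀ i, DifferentiableAt ℝ (fun y => G y i) x) :
    divg (fun y => F y - G y) x = divg F x - divg G x := by
  simp only [divg, Pi.sub_apply, ← sum_sub_distrib]
  refine sum_congr rfl fun i _ => ?_
  rw [fderiv_fun_sub (hF i) (hG i)]
  rfl

lemma divg_smul (hφ : DifferentiableAt ℝ φ x) (hF : ∀ i, DifferentiableAt ℝ (fun y => F y i) x) :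
    divg (fun y => φ y • F y) x = ∑ i, pd φ i x * F x i + φ x * divg F x := by
  simp only [divg, Pi.smul_apply, smul_eq_mul, mul_sum, ← sum_add_distrib]
  refine sum_congr rfl fun i _ => ?_
  rw [fderiv_fun_mul hφ (hF i)]
  simp only [pd, add_apply, smul_apply, smul_eq_mul]
  ring

lemma divg_const_smul (c : ℝ) (F : (Fin d → ℝ) → (Fin d → ℝ)) (x : Fin d → ℝ) :
    divg (c • F) x = c * divg F x := by
  simp only [divg, mul_sum]
  refine sum_congr rfl fun i _ => ?_
  change fderiv ℝ (c • fun y => F y i) x _ = _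
  rw [fderiv_const_smul_field]
  rfl

lemma pd_mul (hf : DifferentiableAt ℝ f x) (hg : DifferentiableAt ℝ g x) (i : Fin d) :
    pd (fun y => f y * g y) i x = pd f i x * g x + f x * pd g i x := by
  simp only [pd, fderiv_fun_mul hf hg, add_apply, smul_apply, smul_eq_mul]
  ring

lemma sum_pd_mul_aGrad (a : (Fin d → ℝ) → Matrix (Fin d) (Fin d) ℝ) (f g : (Fin d → ℝ) → ℝ)
    (x : Fin d → ℝ) : ∑ i, pd f i x * aGrad a g x i = quadF a f g x := by
  simp only [aGrad, quadF, mul_sum, mul_assoc]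

lemma quadF_comm {a : (Fin d → ℝ) → Matrix (Fin d) (Fin d) ℝ} (hsym : ∀ i j, a x i j = a x j i)
    (f g : (Fin d → ℝ) → ℝ) : quadF a f g x = quadF a g f x := by
  unfold quadF
  rw [sum_comm]
  refine sum_congr rfl fun i _ => sum_congr rfl fun j _ => ?_
  rw [hsym]
  ring

lemma divg_greenFlux {a : (Fin d → ℝ) → Matrix (Fin d) (Fin d) ℝ} {b : (Fin d → ℝ) → (Fin d → ℝ)}
    (hsym : ∀ i j, a x i j = a x j i) (hf : DifferentiableAt ℝ f x) (hg : DifferentiableAt ℝ g x)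
    (haf : ∀ i, DifferentiableAt ℝ (fun y => aGrad a f y i) x)
    (hag : ∀ i, DifferentiableAt ℝ (fun y => aGrad a g y i) x)
    (hb : ∀ i, DifferentiableAt ℝ (fun y => b y i) x) :
    divg (greenFlux a b f g) x = g x * Lop a b f x - f x * Ladj a b g x := by
  have hfg : DifferentiableAt ℝ (fun y => f y * g y) x := hf.mul hg
  have hcross : ∀ i, DifferentiableAt ℝ (fun y => (g y • aGrad a f y - f y • aGrad a g y) i) x :=
    fun i => (hg.mul (haf i)).sub (hf.mul (hag i))
  have hconv : ∀ i, DifferentiableAt ℝ (fun y => ((f y * g y) • b y) i) x :=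
    fun i => hfg.mul (hb i)
  unfold greenFlux
  rw [divg_add hcross hconv, divg_sub (F := fun y => g y • aGrad a f y)
      (G := fun y => f y • aGrad a g y) (fun i => hg.mul (haf i)) (fun i => hf.mul (hag i)),
    divg_smul hg haf, divg_smul hf hag, divg_smul hfg hb, sum_pd_mul_aGrad, sum_pd_mul_aGrad,
    quadF_comm hsym]
  have hprod : ∑ i, pd (fun y => f y * g y) i x * b x i
      = g x * ∑ i, b x i * pd f i x + f x * ∑ i, b x i * pd g i x := by
    simp only [pd_mul hf hg, mul_sum, ← sum_add_distrib]
    exact sum_congr rfl fun i _ => by ring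
  rw [hprod, Lop, Ladj]
  ring

end Pointwise

section Regularity

variable {U : Set (Fin d → ℝ)} {a : (Fin d → ℝ) → Matrix (Fin d) (Fin d) ℝ}
  {f : (Fin d → ℝ) → ℝ} {m n : WithTop ℕ∞}

lemma ContDiffOn.pd (hf : ContDiffOn ℝ n f U) (hU : IsOpen U) (hmn : m + 1 ≤ n) (j : Fin d) :
    ContDiffOn ℝ m (pd f j) U :=
  (hf.fderiv_of_isOpen hU hmn).clm_apply contDiffOn_const

lemma ContDiffOn.aGrad (hf : ContDiffOn ℝ n f U) (hU : IsOpen U) (hmn : m + 1 ≤ n)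
    (ha : ∀ i j, ContDiffOn ℝ m (fun x => a x i j) U) (i : Fin d) :
    ContDiffOn ℝ m (fun x => aGrad a f x i) U :=
  .sum fun j _ => (ha i j).mul (hf.pd hU hmn j)

lemma ContDiffOn.greenFlux {b : (Fin d → ℝ) → (Fin d → ℝ)} {g : (Fin d → ℝ) → ℝ}
    (hf : ContDiffOn ℝ 2 f U) (hg : ContDiffOn ℝ 2 g U) (hU : IsOpen U)
    (ha : ∀ i j, ContDiffOn ℝ 1 (fun x => a x i j) U) (hb : ∀ i, ContDiffOn ℝ 1 (fun x => b x i) U)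
    (i : Fin d) : ContDiffOn ℝ 1 (fun x => greenFlux a b f g x i) U := by
  have hf1 : ContDiffOn ℝ 1 f U := hf.of_le one_le_two
  have hg1 : ContDiffOn ℝ 1 g U := hg.of_le one_le_two
  exact ((hg1.mul (hf.aGrad hU one_add_one_eq_two.le ha i)).sub
    (hf1.mul (hg.aGrad hU one_add_one_eq_two.le ha i))).add ((hf1.mul hg1).mul (hb i))

end Regularity

lemma C2Near.integrableOn {D : Set (Fin d → ℝ)} {f : (Fin d → ℝ) → ℝ} (hf : C2Near D f)
    (hD : Bornology.IsBounded D) : IntegrableOn f D := by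
  obtain ⟨U, -, hDU, hfU⟩ := hf
  exact (hfU.continuousOn.mono hDU |>.integrableOn_compact hD.isCompact_closure).mono_set
    subset_closure

theorem setIntegral_mul_Lop_sub_mul_Ladj_eq_zero {D U : Set (Fin d → ℝ)} (hD : MeasurableSet D)
    (hdiv : DivProp D) (hU : IsOpen U) (hDU : closure D ⊆ U)
    {a : (Fin d → ℝ) → Matrix (Fin d) (Fin d) ℝ} (ha : ∀ i j, ContDiffOn ℝ 1 (fun x => a x i j) U)
    (hsym : ∀ x i j, a x i j = a x j i)
    {b : (Fin d → ℝ) → (Fin d → ℝ)} (hb : ∀ i, ContDiffOn ℝ 1 (fun x => b x i) U)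
    {f g : (Fin d → ℝ) → ℝ} (hf : ContDiffOn ℝ 2 f U) (hg : ContDiffOn ℝ 2 g U)
    (hf0 : ∀ x ∈ frontier D, f x = 0) (hg0 : ∀ x ∈ frontier D, g x = 0) :
    ∫ x in D, (g x * Lop a b f x - f x * Ladj a b g x) = 0 := by
  have hflux : C1NearVF D (greenFlux a b f g) :=
    ⟨U, hU, hDU, hf.greenFlux hg hU ha hb⟩
  have hflux0 : ∀ x ∈ frontier D, greenFlux a b f g x = 0 := fun x hx => by
    simp [greenFlux, hf0 x hx, hg0 x hx]
  rw [← hdiv _ hflux hflux0]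
  refine setIntegral_congr_fun hD fun x hx => ?_
  have hxU : U ∈ nhds x := hU.mem_nhds (hDU (subset_closure hx))
  have diff : ∀ {h : (Fin d → ℝ) → ℝ}, ContDiffOn ℝ 1 h U → DifferentiableAt ℝ h x :=
    fun h => (h.differentiableOn one_ne_zero).differentiableAt hxU
  exact (divg_greenFlux (hsym x) (diff (hf.of_le one_le_two)) (diff (hg.of_le one_le_two))
    (fun i => diff (hf.aGrad hU one_add_one_eq_two.le ha i))
    (fun i => diff (hg.aGrad hU one_add_one_eq_two.le ha i)) (fun i => diff (hb i))).symm

theorem stmt15_general {d : ℕ} (D : Set (Fin d → ℝ)) (hD : IsOpen D)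
    (hDb : Bornology.IsBounded D) (hdiv : DivProp D)
    (a : (Fin d → ℝ) → Matrix (Fin d) (Fin d) ℝ)
    (ha : ∀ i j, ContDiff ℝ 1 (fun x => a x i j))
    (hsym : ∀ x i j, a x i j = a x j i)
    (b : (Fin d → ℝ) → (Fin d → ℝ)) (hb : ∀ i, ContDiff ℝ 1 (fun x => b x i))
    (hdivb : ∃ U : Set (Fin d → ℝ), IsOpen U ∧ closure D ⊆ U ∧ ∀ x ∈ U, divg b x = 0)
    (γ β : ℝ)
    (up um : (Fin d → ℝ) → ℝ)
    (hup : C2Near D up) (hup0 : ∀ x ∈ frontier D, up x = 0)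
    (hupeq : ∀ x ∈ D,
      β * up x - (divg (aGrad a up) x + γ * ∑ i, b x i * pd up i x) = 1)
    (hum : C2Near D um) (hum0 : ∀ x ∈ frontier D, um x = 0)
    (humeq : ∀ x ∈ D,
      β * um x - (divg (aGrad a um) x - γ * ∑ i, b x i * pd um i x) = 1) :
    (∫ x in D, up x) = ∫ x in D, um x := by
  have hup_int := hup.integrableOn hDb
  have hum_int := hum.integrableOn hDb
  obtain ⟨Up, hUp, hDUp, hup⟩ := hup
  obtain ⟨Um, hUm, hDUm, hum⟩ := hum
  obtain ⟨V, -, hDV, hdivb⟩ := hdivb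
  have hgreen := setIntegral_mul_Lop_sub_mul_Ladj_eq_zero (b := γ • b) hD.measurableSet hdiv
    (hUp.inter hUm) (Set.subset_inter hDUp hDUm) (fun i j => (ha i j).contDiffOn) hsym
    (fun i => ((hb i).const_smul γ).contDiffOn) (hup.mono Set.inter_subset_left)
    (hum.mono Set.inter_subset_right) hup0 hum0
  have hpointwise : ∀ x ∈ D,
      um x * Lop a (γ • b) up x - up x * Ladj a (γ • b) um x = up x - um x := by
    intro x hx
    have hbx : divg (γ • b) x = 0 := by
      rw [divg_const_smul, hdivb x (hDV (subset_closure hx)), mul_zero]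
    simp only [Lop, Ladj, hbx, Pi.smul_apply, smul_eq_mul, mul_assoc, ← mul_sum]
    linear_combination up x * humeq x hx - um x * hupeq x hx
  rw [setIntegral_congr_fun hD.measurableSet hpointwise, integral_sub hup_int hum_int] at hgreen
  exact sub_eq_zero.mp hgreen

/-- Theorem 4.1(1), analytic form: the solutions of `(β − ∇·a∇ − γb·∇)u₊ = 1`
and `(β − ∇·a∇ + γb·∇)u₋ = 1` with zero boundary values have the same integral over `D`. -/
theorem stmt15 {d : ℕ} (D : Set (Fin d → ℝ)) (hD : IsOpen D)
    (hDb : Bornology.IsBounded D) (hdiv : DivProp D)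
    (a : (Fin d → ℝ) → Matrix (Fin d) (Fin d) ℝ)
    (ha : ∀ i j, ContDiff ℝ 1 (fun x => a x i j))
    (hsym : ∀ x i j, a x i j = a x j i)
    (b : (Fin d → ℝ) → (Fin d → ℝ)) (hb : ∀ i, ContDiff ℝ 1 (fun x => b x i))
    (hdivb : ∃ U : Set (Fin d → ℝ), IsOpen U ∧ closure D ⊆ U ∧ ∀ x ∈ U, divg b x = 0)
    (γ β : ℝ) (hβ : 0 ≤ β)
    (up um : (Fin d → ℝ) → ℝ)
    (hup : C2Near D up) (hup0 : ∀ x ∈ frontier D, up x = 0)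
    (hupeq : ∀ x ∈ D,
      β * up x - (divg (aGrad a up) x + γ * ∑ i, b x i * pd up i x) = 1)
    (hum : C2Near D um) (hum0 : ∀ x ∈ frontier D, um x = 0)
    (humeq : ∀ x ∈ D,
      β * um x - (divg (aGrad a um) x - γ * ∑ i, b x i * pd um i x) = 1) :
    (∫ x in D, up x) = ∫ x in D, um x :=
  stmt15_general D hD hDb hdiv a ha hsym b hb hdivb γ β up um hup hup0 hupeq hum hum0 humeq
end
end

section
/- (Theorem 4.2, analytic form: monotonicity law.) Let D ⊆ ℝ^d be a bounded open set with the divergence property, let β ≥ 0, let a₁, a₂ have C¹ entries with a₁, a₂ symmetric, a₁(x) positive semidefinite for all x ∈ D, and v·a₁(x)v ≤ v·a₂(x)v for all x ∈ D and v ∈ ℝ^d, and let b have C¹ components with div(b) = 0 on an open neighborhood of the closure of D. Suppose u₁, u₂, ũ₂ are C² on an open neighborhood of the closure of D, vanish on ∂D, and satisfy (β − ∇·a₁∇)u₁ = 1, (β − ∇·a₂∇ − b·∇)u₂ = 1, and (β − ∇·a₂∇ + b·∇)ũ₂ = 1 at every point of D, with ∫_D u₁ dx > 0 and ∫_D u₂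 dx > 0. Then ∫_D u₂ dx ≤ ∫_D u₁ dx. (Probabilistically: the integrated Laplace transforms/mean exit times from D for the diffusion with coefficients (a₂,b) are dominated by those for the symmetric diffusion with coefficient a₁.) -/
open MeasureTheory

noncomputable section

/-!
Testing the three equations against `u₁` and `u₂` and integrating by parts gives
`∫ u₁ = ℰ₁(u₁, u₁)`, `∫ u₂ = ℰ₁(u₂, u₁)` and `∫ u₂ = ℰ₂(u₂, u₂)`, where
`ℰₖ(f, g) = ∫_D β f g + ∇f · aₖ ∇g`. The drift drops out of the last identity because
`∫ u (b · ∇u) = ½ ∫ b · ∇(u²) = -½ ∫ div(b) u² = 0`. Hence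
`0 ≤ ℰ₁(u₁ - u₂, u₁ - u₂) ≤ ℰ₁(u₁, u₁) - 2 ℰ₁(u₂, u₁) + ℰ₂(u₂, u₂) = ∫ u₁ - ∫ u₂`.
-/

section

open Bornology

variable {d : ℕ} {D U : Set (Fin d → ℝ)}

def dirichletForm (D : Set (Fin d → ℝ)) (a : (Fin d → ℝ) → Matrix (Fin d) (Fin d) ℝ) (β : ℝ)
    (f g : (Fin d → ℝ) → ℝ) : ℝ :=
  ∫ x in D, (β * f x * g x + quadF a f g x)

theorem two_mul_sum_mul_le {ι : Type*} [Fintype ι] {A B : Matrix ι ι ℝ}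
    (hA : ∀ i j, A i j = A j i) (hpsd : ∀ v : ι → ℝ, 0 ≤ ∑ i, ∑ j, v i * A i j * v j)
    (hle : ∀ v : ι → ℝ, ∑ i, ∑ j, v i * A i j * v j ≤ ∑ i, ∑ j, v i * B i j * v j)
    (v w : ι → ℝ) :
    2 * ∑ i, ∑ j, v i * A i j * w j
      ≤ ∑ i, ∑ j, w i * A i j * w j + ∑ i, ∑ j, v i * B i j * v j := by
  have hswap : ∑ i, ∑ j, w i * A i j * v j = ∑ i, ∑ j, v i * A i j * w j := by
    rw [Finset.sum_comm]
    exact Finset.sum_congr rfl fun i _ => Finset.sum_congr rfl fun j _ => by rw [hA]; ring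
  have hdiff := hpsd (v - w)
  simp only [Pi.sub_apply, sub_mul, mul_sub, Finset.sum_sub_distrib] at hdiff
  linarith [hle v]

theorem contDiffOn_pd (hU : IsOpen U) {m n : WithTop ℕ∞} {f : (Fin d → ℝ) → ℝ}
    (hf : ContDiffOn ℝ n f U) (hmn : m + 1 ≤ n) (i : Fin d) : ContDiffOn ℝ m (pd f i) U :=
  (ContinuousLinearMap.apply ℝ ℝ (Pi.single i 1 : Fin d → ℝ)).contDiff.comp_contDiffOn
    (hf.fderiv_of_isOpen hU hmn)

theorem continuousOn_divg (hU : IsOpen U) {F : (Fin d → ℝ) → (Fin d → ℝ)}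
    (hF : ∀ i, ContDiffOn ℝ 1 (fun x => F x i) U) : ContinuousOn (divg F) U :=
  continuousOn_finsetSum _ fun i _ => (contDiffOn_pd (m := 0) hU (hF i) (by simp) i).continuousOn

theorem contDiffOn_aGrad (hU : IsOpen U) {a : (Fin d → ℝ) → Matrix (Fin d) (Fin d) ℝ}
    (ha : ∀ i j, ContDiffOn ℝ 1 (fun x => a x i j) U) {g : (Fin d → ℝ) → ℝ}
    (hg : ContDiffOn ℝ 2 g U) (i : Fin d) : ContDiffOn ℝ 1 (fun x => aGrad a g x i) U :=
  ContDiffOn.sum fun j _ => (ha i j).mul (contDiffOn_pd hU hg (by norm_num) j)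

theorem continuousOn_quadF (hU : IsOpen U) {a : (Fin d → ℝ) → Matrix (Fin d) (Fin d) ℝ}
    (ha : ∀ i j, ContinuousOn (fun x => a x i j) U) {f g : (Fin d → ℝ) → ℝ}
    (hf : ContDiffOn ℝ 1 f U) (hg : ContDiffOn ℝ 1 g U) : ContinuousOn (quadF a f g) U :=
  continuousOn_finsetSum _ fun i _ => continuousOn_finsetSum _ fun j _ =>
    (((contDiffOn_pd (m := 0) hU hf (by simp) i).continuousOn.mul (ha i j)).mul
      (contDiffOn_pd (m := 0) hU hg (by simp) j).continuousOn)

theorem divg_mul {f : (Fin d → ℝ) → ℝ} {G : (Fin d → ℝ) → (Fin d → ℝ)} {x : Fin d → ℝ}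
    (hf : DifferentiableAt ℝ f x) (hG : ∀ i, DifferentiableAt ℝ (fun y => G y i) x) :
    divg (fun y i => f y * G y i) x = ∑ i, pd f i x * G x i + f x * divg G x := by
  simp only [divg, pd, fderiv_fun_mul hf (hG _), Finset.mul_sum, ← Finset.sum_add_distrib]
  exact Finset.sum_congr rfl fun i _ => by
    simp only [add_apply, smul_apply, smul_eq_mul]
    ring

theorem integrableOn_of_continuousOn_closure (hDb : IsBounded D) {f : (Fin d → ℝ) → ℝ}
    (hf : ContinuousOn f (closure D)) : IntegrableOn f D :=
  (hf.integrableOn_compact hDb.isCompact_closure).mono_set subset_closure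

theorem setIntegral_mul_divg_aGrad (hD : MeasurableSet D) (hDb : IsBounded D) (hdiv : DivProp D)
    (hU : IsOpen U) (hcl : closure D ⊆ U) {a : (Fin d → ℝ) → Matrix (Fin d) (Fin d) ℝ}
    (ha : ∀ i j, ContDiffOn ℝ 1 (fun x => a x i j) U) {f g : (Fin d → ℝ) → ℝ}
    (hf : ContDiffOn ℝ 1 f U) (hg : ContDiffOn ℝ 2 g U) (hf0 : ∀ x ∈ frontier D, f x = 0) :
    ∫ x in D, f x * divg (aGrad a g) x = -∫ x in D, quadF a f g x := by
  have hag := contDiffOn_aGrad hU ha hg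
  have hflux := hdiv (fun y i => f y * aGrad a g y i) ⟨U, hU, hcl, fun i => hf.mul (hag i)⟩
    (fun x hx => by funext i; simp [hf0 x hx])
  have hprod : ∀ x ∈ D, divg (fun y i => f y * aGrad a g y i) x
      = quadF a f g x + f x * divg (aGrad a g) x := by
    intro x hx
    have hxU := hU.mem_nhds (hcl (subset_closure hx))
    rw [divg_mul (hf.differentiableOn one_ne_zero |>.differentiableAt hxU)
      (fun i => (hag i).differentiableOn one_ne_zero |>.differentiableAt hxU)]
    simp only [quadF, aGrad, Finset.mul_sum, mul_assoc]
  have hquad : IntegrableOn (fun x => quadF a f g x) D :=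
    integrableOn_of_continuousOn_closure hDb
      ((continuousOn_quadF hU (fun i j => (ha i j).continuousOn) hf (hg.of_le (by norm_num))).mono
        hcl)
  have hfdiv : IntegrableOn (fun x => f x * divg (aGrad a g) x) D :=
    integrableOn_of_continuousOn_closure hDb
      ((hf.continuousOn.mul (continuousOn_divg hU hag)).mono hcl)
  rw [setIntegral_congr_fun hD hprod, integral_add hquad hfdiv]
    at hflux
  linarith

theorem setIntegral_mul_resolvent (hD : MeasurableSet D) (hDb : IsBounded D) (hdiv : DivProp D)
    (hU : IsOpen U) (hcl : closure D ⊆ U) {a : (Fin d → ℝ) → Matrix (Fin d) (Fin d) ℝ}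
    (ha : ∀ i j, ContDiffOn ℝ 1 (fun x => a x i j) U) (β : ℝ) {f g : (Fin d → ℝ) → ℝ}
    (hf : ContDiffOn ℝ 1 f U) (hg : ContDiffOn ℝ 2 g U) (hf0 : ∀ x ∈ frontier D, f x = 0) :
    ∫ x in D, f x * (β * g x - divg (aGrad a g) x) = dirichletForm D a β f g := by
  have hfg : IntegrableOn (fun x => β * f x * g x) D :=
    integrableOn_of_continuousOn_closure hDb
      ((continuousOn_const.mul hf.continuousOn |>.mul hg.continuousOn).mono hcl)
  have hfdiv : IntegrableOn (fun x => f x * divg (aGrad a g) x) D :=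
    integrableOn_of_continuousOn_closure hDb
      ((hf.continuousOn.mul (continuousOn_divg hU (contDiffOn_aGrad hU ha hg))).mono hcl)
  have hquad : IntegrableOn (fun x => quadF a f g x) D :=
    integrableOn_of_continuousOn_closure hDb
      ((continuousOn_quadF hU (fun i j => (ha i j).continuousOn) hf (hg.of_le (by norm_num))).mono
        hcl)
  simp only [mul_sub, ← mul_assoc, mul_comm (f _) β]
  rw [dirichletForm, integral_sub hfg hfdiv, integral_add hfg hquad,
    setIntegral_mul_divg_aGrad hD hDb hdiv hU hcl ha hf hg hf0, sub_neg_eq_add]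

theorem setIntegral_eq_dirichletForm (hD : MeasurableSet D) (hDb : IsBounded D)
    (hdiv : DivProp D) (hU : IsOpen U) (hcl : closure D ⊆ U)
    {a : (Fin d → ℝ) → Matrix (Fin d) (Fin d) ℝ} (ha : ∀ i j, ContDiffOn ℝ 1 (fun x => a x i j) U)
    {β : ℝ} {f g : (Fin d → ℝ) → ℝ} (hf : ContDiffOn ℝ 1 f U) (hg : ContDiffOn ℝ 2 g U)
    (hf0 : ∀ x ∈ frontier D, f x = 0) (hgeq : ∀ x ∈ D, β * g x - divg (aGrad a g) x = 1) :
    ∫ x in D, f x = dirichletForm D a β f g := by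
  rw [← setIntegral_mul_resolvent hD hDb hdiv hU hcl ha β hf hg hf0]
  exact setIntegral_congr_fun hD fun x hx => by simp [hgeq x hx]

theorem setIntegral_mul_drift_eq_zero (hD : MeasurableSet D) (hdiv : DivProp D) (hU : IsOpen U)
    (hcl : closure D ⊆ U) {b : (Fin d → ℝ) → (Fin d → ℝ)}
    (hb : ∀ i, ContDiffOn ℝ 1 (fun x => b x i) U) (hdivb : ∀ x ∈ U, divg b x = 0)
    {f : (Fin d → ℝ) → ℝ} (hf : ContDiffOn ℝ 1 f U) (hf0 : ∀ x ∈ frontier D, f x = 0) :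
    ∫ x in D, f x * ∑ i, b x i * pd f i x = 0 := by
  have hflux := hdiv (fun y i => (f y * f y) * b y i)
    ⟨U, hU, hcl, fun i => (hf.mul hf).mul (hb i)⟩ (fun x hx => by funext i; simp [hf0 x hx])
  have hprod : ∀ x ∈ D, divg (fun y i => (f y * f y) * b y i) x
      = 2 * (f x * ∑ i, b x i * pd f i x) := by
    intro x hx
    have hxU := hcl (subset_closure hx)
    have hfx := hf.differentiableOn one_ne_zero |>.differentiableAt (hU.mem_nhds hxU)
    have hsq : ∀ i, pd (fun y => f y * f y) i x = 2 * (f x * pd f i x) := fun i => by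
      simp only [pd, fderiv_fun_mul hfx hfx, add_apply, smul_apply, smul_eq_mul]
      ring
    rw [divg_mul (f := fun y => f y * f y) (hfx.mul hfx)
      (fun i => (hb i).differentiableOn one_ne_zero |>.differentiableAt (hU.mem_nhds hxU)),
      hdivb x hxU]
    simp only [hsq, mul_zero, add_zero, Finset.mul_sum]
    exact Finset.sum_congr rfl fun i _ => by ring
  rw [setIntegral_congr_fun hD hprod, integral_const_mul] at hflux
  linarith

theorem setIntegral_self_eq_dirichletForm (hD : MeasurableSet D) (hDb : IsBounded D)
    (hdiv : DivProp D) (hU : IsOpen U) (hcl : closure D ⊆ U)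
    {a : (Fin d → ℝ) → Matrix (Fin d) (Fin d) ℝ} (ha : ∀ i j, ContDiffOn ℝ 1 (fun x => a x i j) U)
    {b : (Fin d → ℝ) → (Fin d → ℝ)} (hb : ∀ i, ContDiffOn ℝ 1 (fun x => b x i) U)
    (hdivb : ∀ x ∈ U, divg b x = 0) {β : ℝ} {u : (Fin d → ℝ) → ℝ} (hu : ContDiffOn ℝ 2 u U)
    (hu0 : ∀ x ∈ frontier D, u x = 0) (hueq : ∀ x ∈ D, β * u x - Lop a b u x = 1) :
    ∫ x in D, u x = dirichletForm D a β u u := by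
  have hu1 : ContDiffOn ℝ 1 u U := hu.of_le (by norm_num)
  have hres : IntegrableOn
      (fun x => u x * (β * u x - divg (aGrad a u) x)) D :=
    integrableOn_of_continuousOn_closure hDb ((hu.continuousOn.mul
      ((continuousOn_const.mul hu.continuousOn).sub
        (continuousOn_divg hU (contDiffOn_aGrad hU ha hu)))).mono hcl)
  have hdrift : IntegrableOn (fun x => u x * ∑ i, b x i * pd u i x) D :=
    integrableOn_of_continuousOn_closure hDb ((hu.continuousOn.mul
      (continuousOn_finsetSum _ fun i _ => (hb i).continuousOn.mul
        (contDiffOn_pd (m := 0) hU hu1 (by simp) i).continuousOn)).mono hcl)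
  calc ∫ x in D, u x
      = ∫ x in D, (u x * (β * u x - divg (aGrad a u) x) - u x * ∑ i, b x i * pd u i x) :=
        setIntegral_congr_fun hD fun x hx => by
          have := hueq x hx
          simp only [Lop] at this
          linear_combination (-u x) * this
    _ = dirichletForm D a β u u := by
      rw [integral_sub hres hdrift,
        setIntegral_mul_resolvent hD hDb hdiv hU hcl ha β hu1 hu hu0,
        setIntegral_mul_drift_eq_zero hD hdiv hU hcl hb hdivb hu1 hu0, sub_zero]

theorem two_mul_dirichletForm_le (hD : MeasurableSet D) (hDb : IsBounded D) (hU : IsOpen U)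
    (hcl : closure D ⊆ U) {a₁ a₂ : (Fin d → ℝ) → Matrix (Fin d) (Fin d) ℝ}
    (ha₁ : ∀ i j, ContinuousOn (fun x => a₁ x i j) U)
    (ha₂ : ∀ i j, ContinuousOn (fun x => a₂ x i j) U) (hsym₁ : ∀ x i j, a₁ x i j = a₁ x j i)
    (hpsd₁ : ∀ x ∈ D, ∀ v : Fin d → ℝ, 0 ≤ ∑ i, ∑ j, v i * a₁ x i j * v j)
    (hle : ∀ x ∈ D, ∀ v : Fin d → ℝ,
      (∑ i, ∑ j, v i * a₁ x i j * v j) ≤ ∑ i, ∑ j, v i * a₂ x i j * v j)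
    {β : ℝ} (hβ : 0 ≤ β) {f g : (Fin d → ℝ) → ℝ} (hf : ContDiffOn ℝ 1 f U)
    (hg : ContDiffOn ℝ 1 g U) :
    2 * dirichletForm D a₁ β f g ≤ dirichletForm D a₁ β g g + dirichletForm D a₂ β f f := by
  have hint : ∀ {a : (Fin d → ℝ) → Matrix (Fin d) (Fin d) ℝ} {φ ψ : (Fin d → ℝ) → ℝ},
      (∀ i j, ContinuousOn (fun x => a x i j) U) → ContDiffOn ℝ 1 φ U → ContDiffOn ℝ 1 ψ U →
      IntegrableOn (fun x => β * φ x * ψ x + quadF a φ ψ x) D :=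
    fun ha hφ hψ => integrableOn_of_continuousOn_closure hDb
      ((((continuousOn_const.mul hφ.continuousOn).mul hψ.continuousOn).add
        (continuousOn_quadF hU ha hφ hψ)).mono hcl)
  have hpt : ∀ x ∈ D, 2 * (β * f x * g x + quadF a₁ f g x)
      ≤ (β * g x * g x + quadF a₁ g g x) + (β * f x * f x + quadF a₂ f f x) := by
    intro x hx
    have hquad := two_mul_sum_mul_le (hsym₁ x) (hpsd₁ x hx) (hle x hx)
      (fun i => pd f i x) (fun j => pd g j x)
    have hsq : 0 ≤ β * (f x - g x) ^ 2 := mul_nonneg hβ (sq_nonneg _)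
    simp only [quadF] at hquad ⊢
    nlinarith
  rw [dirichletForm, dirichletForm, dirichletForm, ← integral_const_mul,
    ← integral_add (hint ha₁ hg hg) (hint ha₂ hf hf)]
  exact setIntegral_mono_on ((hint ha₁ hf hg).const_mul 2)
    ((hint ha₁ hg hg).add (hint ha₂ hf hf)) hD hpt

end

theorem stmt17_general {d : ℕ} (D : Set (Fin d → ℝ)) (hD : IsOpen D)
    (hDb : Bornology.IsBounded D) (hdiv : DivProp D)
    (β : ℝ) (hβ : 0 ≤ β)
    (a₁ a₂ : (Fin d → ℝ) → Matrix (Fin d) (Fin d) ℝ)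
    (ha₁ : ∀ i j, ContDiff ℝ 1 (fun x => a₁ x i j))
    (ha₂ : ∀ i j, ContDiff ℝ 1 (fun x => a₂ x i j))
    (hsym₁ : ∀ x i j, a₁ x i j = a₁ x j i)
    (hpsd₁ : ∀ x ∈ D, ∀ v : Fin d → ℝ, 0 ≤ ∑ i, ∑ j, v i * a₁ x i j * v j)
    (hle : ∀ x ∈ D, ∀ v : Fin d → ℝ,
      (∑ i, ∑ j, v i * a₁ x i j * v j) ≤ ∑ i, ∑ j, v i * a₂ x i j * v j)
    (b : (Fin d → ℝ) → (Fin d → ℝ)) (hb : ∀ i, ContDiff ℝ 1 (fun x => b x i))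
    (hdivb : ∃ U : Set (Fin d → ℝ), IsOpen U ∧ closure D ⊆ U ∧ ∀ x ∈ U, divg b x = 0)
    (u₁ u₂ : (Fin d → ℝ) → ℝ)
    (hu₁ : C2Near D u₁) (hu₁0 : ∀ x ∈ frontier D, u₁ x = 0)
    (hu₁eq : ∀ x ∈ D, β * u₁ x - divg (aGrad a₁ u₁) x = 1)
    (hu₂ : C2Near D u₂) (hu₂0 : ∀ x ∈ frontier D, u₂ x = 0)
    (hu₂eq : ∀ x ∈ D,
      β * u₂ x - (divg (aGrad a₂ u₂) x + ∑ i, b x i * pd u₂ i x) = 1) :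
    (∫ x in D, u₂ x) ≤ ∫ x in D, u₁ x := by
  obtain ⟨U₁, hU₁, hcl₁, hu₁⟩ := hu₁
  obtain ⟨U₂, hU₂, hcl₂, hu₂⟩ := hu₂
  obtain ⟨U₃, hU₃, hcl₃, hdivb⟩ := hdivb
  obtain ⟨U, hU, hcl, hu₁U, hu₂U, hdivbU⟩ : ∃ U, IsOpen U ∧ closure D ⊆ U ∧
      ContDiffOn ℝ 2 u₁ U ∧ ContDiffOn ℝ 2 u₂ U ∧ ∀ x ∈ U, divg b x = 0 :=
    ⟨U₁ ∩ U₂ ∩ U₃, (hU₁.inter hU₂).inter hU₃, fun x hx => ⟨⟨hcl₁ hx, hcl₂ hx⟩, hcl₃ hx⟩,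
      hu₁.mono fun x hx => hx.1.1, hu₂.mono fun x hx => hx.1.2, fun x hx => hdivb x hx.2⟩
  have ha₁U := fun i j => (ha₁ i j).contDiffOn (s := U)
  have ha₂U := fun i j => (ha₂ i j).contDiffOn (s := U)
  have h₁₁ : ∫ x in D, u₁ x = dirichletForm D a₁ β u₁ u₁ :=
    setIntegral_eq_dirichletForm hD.measurableSet hDb hdiv hU hcl ha₁U
      (hu₁U.of_le (by norm_num)) hu₁U hu₁0 hu₁eq
  have h₂₁ : ∫ x in D, u₂ x = dirichletForm D a₁ β u₂ u₁ :=
    setIntegral_eq_dirichletForm hD.measurableSet hDb hdiv hU hcl ha₁U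
      (hu₂U.of_le (by norm_num)) hu₁U hu₂0 hu₁eq
  have h₂₂ : ∫ x in D, u₂ x = dirichletForm D a₂ β u₂ u₂ :=
    setIntegral_self_eq_dirichletForm hD.measurableSet hDb hdiv hU hcl ha₂U
      (fun i => (hb i).contDiffOn) hdivbU hu₂U hu₂0 hu₂eq
  have hcross := two_mul_dirichletForm_le hD.measurableSet hDb hU hcl
    (fun i j => (ha₁U i j).continuousOn) (fun i j => (ha₂U i j).continuousOn) hsym₁ hpsd₁ hle hβ
    (hu₂U.of_le (by norm_num)) (hu₁U.of_le (by norm_num))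
  linarith

/-- Theorem 4.2, analytic form: monotonicity law comparing the diffusion with
coefficients `(a₂, b)` against the symmetric diffusion with coefficient `a₁ ≤ a₂`. -/
theorem stmt17 {d : ℕ} (D : Set (Fin d → ℝ)) (hD : IsOpen D)
    (hDb : Bornology.IsBounded D) (hdiv : DivProp D)
    (β : ℝ) (hβ : 0 ≤ β)
    (a₁ a₂ : (Fin d → ℝ) → Matrix (Fin d) (Fin d) ℝ)
    (ha₁ : ∀ i j, ContDiff ℝ 1 (fun x => a₁ x i j))
    (ha₂ : ∀ i j, ContDiff ℝ 1 (fun x => a₂ x i j))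
    (hsym₁ : ∀ x i j, a₁ x i j = a₁ x j i)
    (hsym₂ : ∀ x i j, a₂ x i j = a₂ x j i)
    (hpsd₁ : ∀ x ∈ D, ∀ v : Fin d → ℝ, 0 ≤ ∑ i, ∑ j, v i * a₁ x i j * v j)
    (hle : ∀ x ∈ D, ∀ v : Fin d → ℝ,
      (∑ i, ∑ j, v i * a₁ x i j * v j) ≤ ∑ i, ∑ j, v i * a₂ x i j * v j)
    (b : (Fin d → ℝ) → (Fin d → ℝ)) (hb : ∀ i, ContDiff ℝ 1 (fun x => b x i))
    (hdivb : ∃ U : Set (Fin d → ℝ), IsOpen U ∧ closure D ⊆ U ∧ ∀ x ∈ U, divg b x = 0)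
    (u₁ u₂ ut₂ : (Fin d → ℝ) → ℝ)
    (hu₁ : C2Near D u₁) (hu₁0 : ∀ x ∈ frontier D, u₁ x = 0)
    (hu₁eq : ∀ x ∈ D, β * u₁ x - divg (aGrad a₁ u₁) x = 1)
    (hu₂ : C2Near D u₂) (hu₂0 : ∀ x ∈ frontier D, u₂ x = 0)
    (hu₂eq : ∀ x ∈ D,
      β * u₂ x - (divg (aGrad a₂ u₂) x + ∑ i, b x i * pd u₂ i x) = 1)
    (hut₂ : C2Near D ut₂) (hut₂0 : ∀ x ∈ frontier D, ut₂ x = 0)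
    (hut₂eq : ∀ x ∈ D,
      β * ut₂ x - (divg (aGrad a₂ ut₂) x - ∑ i, b x i * pd ut₂ i x) = 1)
    (hpos₁ : 0 < ∫ x in D, u₁ x) (hpos₂ : 0 < ∫ x in D, u₂ x) :
    (∫ x in D, u₂ x) ≤ ∫ x in D, u₁ x :=
  stmt17_general D hD hDb hdiv β hβ a₁ a₂ ha₁ ha₂ hsym₁ hpsd₁ hle b hb hdivb u₁ u₂ hu₁ hu₁0 hu₁eq
    hu₂ hu₂0 hu₂eq
end
end
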